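/- Let p > 1, let G be a graph of order n, let x = [x_i] be a nonnegative unit eigenvector to λ = λ^(p)(G), and let u be a vertex with x_u = min{x_1,...,x_n}, σ = x_u^p. Then λ^(p)(G - u) ≥ λ (1 - 2σ) / (1 - σ)^(2/p). -/

import Mathlib

open Finset

open scoped Classical

/-- The p-spectral radius of a graph `G`:
`λ^(p)(G) = max { 2 ∑_{{i,j}∈E(G)} x_i x_j : ∑ |x_i|^p = 1 }`,
where the quadratic form is written as `∑ i ∑ j, if G.Adj i j then x i * x j else 0`. -/

noncomputable def pSpec {V : Type*} [Fintype V] (G : SimpleGraph V) (p : ℝ) : ℝ :=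
  sSup {y : ℝ | ∃ x : V → ℝ, (∑ i, |x i| ^ p) = 1 ∧
    y = ∑ i, ∑ j, if G.Adj i j then x i * x j else 0}

/-! Splitting off the row and column of `u`, the quadratic form of `x` on `G` is that of its
restriction `z` to `G - u` plus `2 x_u ∑_{j ∼ u} x_j`, which the eigenequation at `u` turns into
`2λσ`. So `z` has form value `λ(1 - 2σ)` and `∑ |z_i|^p = 1 - σ`, and rescaling `z` to unit
`p`-norm gives a competitor for `λ^(p)(G - u)` of value `λ(1 - 2σ)/(1 - σ)^(2/p)`. -/

section

variable {V : Type*} [Fintype V]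

noncomputable def adjForm (G : SimpleGraph V) (x : V → ℝ) : ℝ :=
  ∑ i, ∑ j, if G.Adj i j then x i * x j else 0

lemma adjForm_const_mul (G : SimpleGraph V) (a : ℝ) (x : V → ℝ) :
    adjForm G (fun i => a * x i) = a ^ 2 * adjForm G x := by
  simp only [adjForm, mul_sum]
  refine sum_congr rfl fun i _ => sum_congr rfl fun j _ => ?_
  split_ifs <;> ring

lemma sum_abs_const_mul_rpow {p : ℝ} (a : ℝ) (x : V → ℝ) :
    ∑ i, |a * x i| ^ p = |a| ^ p * ∑ i, |x i| ^ p := by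
  simp only [abs_mul, Real.mul_rpow (abs_nonneg _) (abs_nonneg _), mul_sum]

lemma adjForm_le_card_sq (G : SimpleGraph V) {p : ℝ} (hp : 0 < p) (x : V → ℝ)
    (hx : ∑ i, |x i| ^ p = 1) : adjForm G x ≤ (Fintype.card V : ℝ) ^ 2 := by
  have hle : ∀ i, |x i| ≤ 1 := fun i =>
    (Real.rpow_le_rpow_iff (abs_nonneg _) zero_le_one hp).1 <| by
      rw [Real.one_rpow, ← hx]
      exact single_le_sum (fun j _ => Real.rpow_nonneg (abs_nonneg _) _) (mem_univ i)
  have hterm : ∀ i j, (if G.Adj i j then x i * x j else 0) ≤ 1 := fun i j => by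
    split_ifs
    · calc x i * x j ≤ |x i| * |x j| := by rw [← abs_mul]; exact le_abs_self _
        _ ≤ 1 := mul_le_one₀ (hle i) (abs_nonneg _) (hle j)
    · exact zero_le_one
  calc adjForm G x ≤ ∑ _i : V, ∑ _j : V, (1 : ℝ) :=
        sum_le_sum fun i _ => sum_le_sum fun j _ => hterm i j
    _ = (Fintype.card V : ℝ) ^ 2 := by simp [sq]

lemma bddAbove_pSpec_set (G : SimpleGraph V) {p : ℝ} (hp : 0 < p) :
    BddAbove {y : ℝ | ∃ x : V → ℝ, (∑ i, |x i| ^ p) = 1 ∧ y = adjForm G x} :=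
  ⟨_, by rintro y ⟨x, hx, rfl⟩; exact adjForm_le_card_sq G hp x hx⟩

lemma adjForm_le_pSpec (G : SimpleGraph V) {p : ℝ} (hp : 0 < p) (x : V → ℝ)
    (hx : ∑ i, |x i| ^ p = 1) : adjForm G x ≤ pSpec G p :=
  le_csSup (bddAbove_pSpec_set G hp) ⟨x, hx, rfl⟩

lemma pSpec_nonneg (G : SimpleGraph V) {p : ℝ} (hp : 0 < p) : 0 ≤ pSpec G p := by
  rcases isEmpty_or_nonempty V with _ | ⟨⟨v⟩⟩
  · simp [pSpec]
  · have hnorm : ∑ i, |(Pi.single v 1 : V → ℝ) i| ^ p = 1 := by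
      rw [Fintype.sum_eq_single v fun i hi => by simp [hi, hp.ne']]
      simp
    have hform : adjForm G (Pi.single v 1) = 0 := by
      refine sum_eq_zero fun i _ => sum_eq_zero fun j _ => ?_
      rcases eq_or_ne i v with rfl | hi
      · rcases eq_or_ne j i with rfl | hj <;> simp [*]
      · simp [hi]
    exact hform ▸ adjForm_le_pSpec G hp _ hnorm

lemma adjForm_div_le_pSpec (G : SimpleGraph V) {p : ℝ} (hp : 0 < p) (x : V → ℝ) :
    adjForm G x / (∑ i, |x i| ^ p) ^ (2 / p) ≤ pSpec G p := by
  set s := ∑ i, |x i| ^ p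
  have hs0 : 0 ≤ s := sum_nonneg fun i _ => Real.rpow_nonneg (abs_nonneg (x i)) p
  rcases hs0.eq_or_lt with hs | hs
  · -- `x = 0`, and the quotient is the junk value `0 / 0 = 0`
    rw [← hs, Real.zero_rpow (by positivity), div_zero]
    exact pSpec_nonneg G hp
  set c := s ^ p⁻¹
  have hc : 0 < c := Real.rpow_pos_of_pos hs _
  have hnorm : ∑ i, |c⁻¹ * x i| ^ p = 1 := by
    rw [sum_abs_const_mul_rpow, abs_of_pos (inv_pos.2 hc), Real.inv_rpow hc.le,
      Real.rpow_inv_rpow hs.le hp.ne', inv_mul_cancel₀ hs.ne']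
  have hden : s ^ (2 / p) = c ^ 2 := by
    rw [div_eq_inv_mul, Real.rpow_mul hs.le, Real.rpow_two]
  calc adjForm G x / s ^ (2 / p) = adjForm G (fun i => c⁻¹ * x i) := by
        rw [adjForm_const_mul, hden, inv_pow, inv_mul_eq_div]
    _ ≤ pSpec G p := adjForm_le_pSpec G hp _ hnorm

lemma adjForm_eq_adjForm_induce_erase_add [DecidableEq V] (G : SimpleGraph V) (x : V → ℝ)
    (u : V) :
    adjForm G x = adjForm (G.induce ↑(univ.erase u)) (fun i => x i) +
      2 * (x u * ∑ j ∈ univ.filter (G.Adj u ·), x j) := by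
  set E := univ.erase u
  set F : V → V → ℝ := fun i j => if G.Adj i j then x i * x j else 0
  have hrow : ∑ j, F u j = x u * ∑ j ∈ univ.filter (G.Adj u ·), x j := by
    rw [sum_filter, mul_sum]
    exact sum_congr rfl fun j _ => by simp only [F]; split_ifs <;> ring
  have hcol : ∑ i, F i u = ∑ j, F u j :=
    sum_congr rfl fun i _ => by simp only [F, G.adj_comm, mul_comm]
  have hinduce : adjForm (G.induce ↑E) (fun i => x i) = ∑ i ∈ E, ∑ j ∈ E, F i j := by
    rw [adjForm, sum_subtype E (fun _ => Iff.rfl) fun i => ∑ j ∈ E, F i j]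
    exact sum_congr rfl fun i _ => (sum_subtype E (fun _ => Iff.rfl) (F i)).symm
  calc adjForm G x = ∑ i, (F i u + ∑ j ∈ E, F i j) :=
        sum_congr rfl fun i _ => (add_sum_erase _ (F i) (mem_univ u)).symm
    _ = ∑ i, F i u + (∑ j ∈ E, F u j + ∑ i ∈ E, ∑ j ∈ E, F i j) := by
        rw [sum_add_distrib, ← add_sum_erase univ (fun i => ∑ j ∈ E, F i j) (mem_univ u)]
    _ = _ := by
        rw [sum_erase _ (by simp [F]), hcol, hrow, hinduce]
        ring

end

theorem stmt18_general {V : Type*} [Fintype V] [DecidableEq V] (G : SimpleGraph V)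
    (p : ℝ) (hp : 1 < p)
    (x : V → ℝ) (hxnn : ∀ i, 0 ≤ x i) (hxnorm : (∑ i, |x i| ^ p) = 1)
    (hattain : (∑ i, ∑ j, if G.Adj i j then x i * x j else 0) = pSpec G p)
    (heig : ∀ k, pSpec G p * x k ^ (p - 1) = ∑ i ∈ Finset.univ.filter (G.Adj k ·), x i)
    (u : V) :
    pSpec G p * (1 - 2 * x u ^ p) / (1 - x u ^ p) ^ (2 / p) ≤
      pSpec (G.induce ↑(Finset.univ.erase u)) p := by
  have hp0 : 0 < p := zero_lt_one.trans hp
  set z : ↥(↑(univ.erase u) : Set V) → ℝ := fun i => x i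
  have hnorm : ∑ i, |z i| ^ p = 1 - x u ^ p := by
    have hsub : ∑ i, |z i| ^ p = ∑ i ∈ univ.erase u, |x i| ^ p :=
      (sum_subtype _ (fun _ => Iff.rfl) fun i => |x i| ^ p).symm
    rw [hsub, ← hxnorm, ← add_sum_erase _ _ (mem_univ u), abs_of_nonneg (hxnn u)]
    ring
  have hrow : x u * ∑ j ∈ univ.filter (G.Adj u ·), x j = pSpec G p * x u ^ p := by
    have hpow : x u ^ (p - 1) * x u = x u ^ p := by
      rw [← Real.rpow_add_one' (hxnn u) (by rw [sub_add_cancel]; exact hp0.ne'), sub_add_cancel]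
    rw [← heig u, ← hpow]
    ring
  have hform : adjForm (G.induce ↑(univ.erase u)) z = pSpec G p * (1 - 2 * x u ^ p) := by
    have := adjForm_eq_adjForm_induce_erase_add G x u
    rw [adjForm, hattain, hrow] at this
    linarith
  calc pSpec G p * (1 - 2 * x u ^ p) / (1 - x u ^ p) ^ (2 / p)
      = adjForm (G.induce ↑(univ.erase u)) z / (∑ i, |z i| ^ p) ^ (2 / p) := by
        rw [hform, hnorm]
    _ ≤ _ := adjForm_div_le_pSpec _ hp0 z

theorem stmt18 {V : Type*} [Fintype V] [DecidableEq V] (G : SimpleGraph V)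
    (p : ℝ) (hp : 1 < p)
    (x : V → ℝ) (hxnn : ∀ i, 0 ≤ x i) (hxnorm : (∑ i, |x i| ^ p) = 1)
    (hattain : (∑ i, ∑ j, if G.Adj i j then x i * x j else 0) = pSpec G p)
    (heig : ∀ k, pSpec G p * x k ^ (p - 1) = ∑ i ∈ Finset.univ.filter (G.Adj k ·), x i)
    (u : V) (hu : ∀ i, x u ≤ x i) :
    pSpec G p * (1 - 2 * x u ^ p) / (1 - x u ^ p) ^ (2 / p) ≤
      pSpec (G.induce ↑(Finset.univ.erase u)) p :=
  stmt18_general G p hp x hxnn hxnorm hattain heig u
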